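/- Let E ⊂ ℝ^d be a nonempty compact set and θ ∈ (0,1]. If the upper θ-intermediate dimension of E is positive, then for every s with 0 < s < upper-dim_θ(E) there exists a constant c > 0 such that for every δ₀ > 0 there exist δ ∈ (0, δ₀) and a Borel probability measure μ_δ supported on E satisfying μ_δ(B(x,r)) ≤ c·r^s for all x ∈ E and all r with δ^{1/θ} ≤ r ≤ δ. -/

import Mathlib

open Metric MeasureTheory Set

/-- An admissible cover of `F` at scale `δ` with exponent `s` and total cost at most `ε`:
a finite cover by sets whose diameters lie in `[δ^(1/θ), δ]` and whose `s`-power sum of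
diameters is at most `ε`. -/
def IsAdmissibleCover {d : ℕ} (θ δ s ε : ℝ) (F : Set (EuclideanSpace ℝ (Fin d))) : Prop :=
  ∃ (n : ℕ) (U : Fin n → Set (EuclideanSpace ℝ (Fin d))),
    F ⊆ ⋃ i, U i ∧
    (∀ i, δ ^ (1 / θ) ≤ Metric.diam (U i) ∧ Metric.diam (U i) ≤ δ) ∧
    ∑ i, Metric.diam (U i) ^ s ≤ ε

/-- The upper θ-intermediate dimension of `F`. -/
noncomputable def upperIntermediateDim {d : ℕ} (θ : ℝ) (F : Set (EuclideanSpace ℝ (Fin d))) : ℝ :=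
  sInf {s : ℝ | 0 ≤ s ∧ ∀ ε > 0, ∃ δ₀ > 0, ∀ δ : ℝ, 0 < δ → δ ≤ δ₀ →
    IsAdmissibleCover θ δ s ε F}

/-! If `s` is below the upper `θ`-intermediate dimension, there are `ε > 0` and arbitrarily
small `δ` for which no cover of `E` by sets of diameter in `[δ^(1/θ), δ]` has `s`-cost at most
`ε`. For such a `δ` run the dyadic mass distribution of Frostman's lemma: put mass `diam^s` on
each finest dyadic cube (of diameter about `δ^(1/θ)`) meeting `E`, and going up the levels to
diameter `δ`, scale down the content of every cube that exceeds `diam^s` of that cube. Each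
finest cube then lies in a highest cube whose content equals its cap; these cubes are disjoint
and cover `E`, so their cost, which is the total mass, exceeds `ε`. After normalising, a ball of
radius `r ∈ [δ^(1/θ), δ]` meets at most `(2d+1)^d` cubes of diameter between `r` and `2r`, each
of mass at most `(2r)^s / ε`. -/

lemma Function.iterate_eq_iterate_of_le {α : Type*} {f : α → α} {x y : α} {k n : ℕ}
    (h : f^[k] x = f^[k] y) (hkn : k ≤ n) : f^[n] x = f^[n] y := by
  obtain ⟨j, rfl⟩ := Nat.exists_eq_add_of_le hkn
  rw [add_comm, Function.iterate_add_apply, h, ← Function.iterate_add_apply]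

open Finset Classical in
lemma exists_isProbabilityMeasure_apply_eq {ι X : Type*} [MeasurableSpace X]
    [MeasurableSingletonClass X] (F : Finset ι) (w : ι → ℝ) (pt : ι → X)
    (hw : ∀ c ∈ F, 0 ≤ w c) (hM : 0 < ∑ c ∈ F, w c) :
    ∃ μ : Measure X, IsProbabilityMeasure μ ∧
      ∀ t, μ t = ENNReal.ofReal ((∑ c ∈ F with pt c ∈ t, w c) / ∑ c ∈ F, w c) := by
  let μ : Measure X := ∑ c ∈ F, ENNReal.ofReal (w c / ∑ c ∈ F, w c) • Measure.dirac (pt c)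
  have hμ : ∀ t, μ t = ENNReal.ofReal ((∑ c ∈ F with pt c ∈ t, w c) / ∑ c ∈ F, w c) := by
    intro t
    rw [sum_div, ENNReal.ofReal_sum_of_nonneg fun c hc =>
      div_nonneg (hw c (mem_filter.1 hc).1) hM.le, sum_filter, Measure.finsetSum_apply]
    refine sum_congr rfl fun c _ => ?_
    by_cases h : pt c ∈ t <;> simp [Measure.dirac_apply, h]
  refine ⟨μ, ⟨?_⟩, hμ⟩
  simp [hμ, div_self hM.ne']

lemma exists_div_two_pow_mem_Ico {a b : ℝ} (ha : 0 < a) (hab : a ≤ b) :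
    ∃ m : ℕ, a ≤ b / 2 ^ m ∧ b / 2 ^ m < 2 * a := by
  obtain ⟨m, hlo, hhi⟩ := exists_nat_pow_near ((one_le_div ha).2 hab) one_lt_two
  refine ⟨m, ?_, ?_⟩
  · rwa [le_div_iff₀ (by positivity), mul_comm, ← le_div_iff₀ ha]
  · rw [div_lt_iff₀ ha, pow_succ] at hhi
    rw [div_lt_iff₀ (by positivity)]
    linarith

lemma exists_le_two_pow_mul_lt {D r : ℝ} {m : ℕ} (hD : D < 2 * r) (hr : r ≤ 2 ^ m * D) :
    ∃ k ≤ m, r ≤ 2 ^ k * D ∧ 2 ^ k * D < 2 * r := by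
  classical
  have hex : ∃ k, r ≤ 2 ^ k * D := ⟨m, hr⟩
  refine ⟨Nat.find hex, Nat.find_min' hex hr, Nat.find_spec hex, ?_⟩
  rcases h : Nat.find hex with _ | k
  · simpa using hD
  · have hk : 2 ^ k * D < r := not_le.1 (Nat.find_min hex (h ▸ k.lt_succ_self))
    rw [pow_succ]
    linarith

open Finset in
lemma EuclideanSpace.dist_le_sqrt_mul_of_abs_sub_le {d : ℕ} {x y : EuclideanSpace ℝ (Fin d)}
    {ℓ : ℝ} (hℓ : 0 ≤ ℓ) (h : ∀ i, |x i - y i| ≤ ℓ) : dist x y ≤ √d * ℓ := by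
  rw [EuclideanSpace.dist_eq, ← Real.sqrt_sq hℓ, ← Real.sqrt_mul d.cast_nonneg]
  gcongr
  calc ∑ i, dist (x i) (y i) ^ 2 ≤ ∑ _i : Fin d, ℓ ^ 2 :=
        sum_le_sum fun i _ => pow_le_pow_left₀ dist_nonneg (h i) 2
    _ = d * ℓ ^ 2 := by simp

lemma EuclideanSpace.dist_eq_sqrt_mul_of_abs_sub_eq {d : ℕ} {x y : EuclideanSpace ℝ (Fin d)}
    {ℓ : ℝ} (hℓ : 0 ≤ ℓ) (h : ∀ i, |x i - y i| = ℓ) : dist x y = √d * ℓ := by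
  rw [EuclideanSpace.dist_eq, ← Real.sqrt_sq hℓ, ← Real.sqrt_mul d.cast_nonneg]
  simp [Real.dist_eq, h]

lemma isAdmissibleCover_of_finset {d : ℕ} {θ δ s ε : ℝ} {F : Set (EuclideanSpace ℝ (Fin d))}
    {κ : Type*} (S : Finset κ) (U : κ → Set (EuclideanSpace ℝ (Fin d)))
    (hcover : F ⊆ ⋃ q ∈ S, U q) (hdiam : ∀ q ∈ S, δ ^ (1 / θ) ≤ diam (U q) ∧ diam (U q) ≤ δ)
    (hsum : ∑ q ∈ S, diam (U q) ^ s ≤ ε) : IsAdmissibleCover θ δ s ε F := by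
  refine ⟨S.card, fun i => U (S.equivFin.symm i), fun x hx => ?_,
    fun i => hdiam _ (S.equivFin.symm i).2, ?_⟩
  · obtain ⟨q, hq, hxq⟩ := mem_iUnion₂.1 (hcover hx)
    exact mem_iUnion.2 ⟨S.equivFin ⟨q, hq⟩, by simpa using hxq⟩
  · rwa [Fintype.sum_equiv S.equivFin.symm _ (fun q : S => diam (U q) ^ s) fun _ => rfl,
      Finset.sum_coe_sort S fun q => diam (U q) ^ s]

lemma exists_not_isAdmissibleCover_of_lt_upperIntermediateDim {d : ℕ} {θ s : ℝ}
    {E : Set (EuclideanSpace ℝ (Fin d))} (hs : 0 ≤ s) (h : s < upperIntermediateDim θ E) :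
    ∃ ε > 0, ∀ δ₀ > 0, ∃ δ, 0 < δ ∧ δ ≤ δ₀ ∧ ¬ IsAdmissibleCover θ δ s ε E := by
  by_contra! h'
  exact h.not_ge (csInf_le ⟨0, fun t ht => ht.1⟩ ⟨hs, h'⟩)

/-- In `ℝ⁰` all sets have diameter `0`, so a nonempty set has no admissible cover and its
dimension is the junk value `sInf ∅ = 0`. -/
lemma upperIntermediateDim_fin_zero_of_nonempty {E : Set (EuclideanSpace ℝ (Fin 0))}
    (hE : E.Nonempty) (θ : ℝ) : upperIntermediateDim θ E = 0 := by
  rw [upperIntermediateDim]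
  convert Real.sInf_empty using 2
  refine eq_empty_of_forall_notMem fun t ⟨_, ht⟩ => ?_
  obtain ⟨δ₀, hδ₀, hcov⟩ := ht 1 one_pos
  obtain ⟨n, U, hEU, hdiam, -⟩ := hcov δ₀ hδ₀ le_rfl
  obtain ⟨i, -⟩ := mem_iUnion.1 (hEU hE.some_mem)
  have hi := (hdiam i).1
  rw [diam_subsingleton Set.subsingleton_of_subsingleton] at hi
  exact (Real.rpow_pos_of_pos hδ₀ _).not_ge hi

namespace Frostman

open Finset

section CappedMass

variable {ι : Type*} [DecidableEq ι] (p : ι → ι) (F : Finset ι)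

noncomputable def clusterMass (w : ι → ℝ) (k : ℕ) (a : ι) : ℝ :=
  ∑ c ∈ F with p^[k] c = a, w c

noncomputable def cappedMass (A : ℕ → ℝ) : ℕ → ι → ℝ
  | 0 => fun c => if c ∈ F then A 0 else 0
  | k + 1 => fun c => cappedMass A k c *
      min 1 (A (k + 1) / clusterMass p F (cappedMass A k) (k + 1) (p^[k + 1] c))

variable {p F} {A : ℕ → ℝ}

lemma clusterMass_zero (w : ι → ℝ) (a : ι) :
    clusterMass p F w 0 a = if a ∈ F then w a else 0 := by
  rw [clusterMass, sum_filter]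
  exact sum_ite_eq' F a w

lemma cappedMass_succ (k : ℕ) (c : ι) :
    cappedMass p F A (k + 1) c = cappedMass p F A k c *
      min 1 (A (k + 1) / clusterMass p F (cappedMass p F A k) (k + 1) (p^[k + 1] c)) := rfl

variable (hA : ∀ k, 0 ≤ A k)
include hA

lemma cappedMass_nonneg (k : ℕ) (c : ι) : 0 ≤ cappedMass p F A k c := by
  induction k generalizing c with
  | zero => unfold cappedMass; split_ifs <;> simp [hA 0]
  | succ k ih =>
    rw [cappedMass_succ]
    exact mul_nonneg (ih c)
      (le_min zero_le_one (div_nonneg (hA _) (sum_nonneg fun c _ => ih c)))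

lemma clusterMass_nonneg (k j : ℕ) (a : ι) : 0 ≤ clusterMass p F (cappedMass p F A k) j a :=
  sum_nonneg fun c _ => cappedMass_nonneg hA k c

lemma cappedMass_antitone (c : ι) : Antitone (cappedMass p F A · c) :=
  antitone_nat_of_succ_le fun k => by
    rw [cappedMass_succ]
    exact mul_le_of_le_one_right (cappedMass_nonneg hA k c) (min_le_left _ _)

lemma clusterMass_cappedMass_succ (k : ℕ) (a : ι) :
    clusterMass p F (cappedMass p F A (k + 1)) (k + 1) a =
      min (clusterMass p F (cappedMass p F A k) (k + 1) a) (A (k + 1)) := by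
  have hfactor : clusterMass p F (cappedMass p F A (k + 1)) (k + 1) a =
      clusterMass p F (cappedMass p F A k) (k + 1) a *
        min 1 (A (k + 1) / clusterMass p F (cappedMass p F A k) (k + 1) a) := by
    rw [clusterMass, clusterMass, sum_mul]
    refine sum_congr rfl fun c hc => ?_
    rw [cappedMass_succ, (mem_filter.1 hc).2]
    rfl
  rw [hfactor]
  rcases (clusterMass_nonneg hA k (k + 1) a).eq_or_lt with h0 | hpos
  · rw [← h0]
    simp [hA]
  · rw [mul_min_of_nonneg _ _ hpos.le, mul_one, mul_div_cancel₀ _ hpos.ne']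

lemma clusterMass_cappedMass_le {k m : ℕ} (hkm : k ≤ m) (a : ι) :
    clusterMass p F (cappedMass p F A m) k a ≤ A k := by
  calc clusterMass p F (cappedMass p F A m) k a ≤ clusterMass p F (cappedMass p F A k) k a :=
        sum_le_sum fun c _ => cappedMass_antitone hA c hkm
    _ ≤ A k := ?_
  cases k with
  | zero =>
    rw [clusterMass_zero]
    split_ifs with ha <;> simp [cappedMass, ha, hA 0]
  | succ k => exact (clusterMass_cappedMass_succ hA k a).trans_le (min_le_right _ _)

lemma cappedMass_succ_eq_of_lt {k : ℕ} {c : ι} (hc : c ∈ F)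
    (hlt : clusterMass p F (cappedMass p F A k) (k + 1) (p^[k + 1] c) < A (k + 1)) :
    cappedMass p F A (k + 1) c = cappedMass p F A k c := by
  set S := clusterMass p F (cappedMass p F A k) (k + 1) (p^[k + 1] c)
  have hcS : cappedMass p F A k c ≤ S :=
    single_le_sum (fun c _ => cappedMass_nonneg hA k c) (mem_filter.2 ⟨hc, rfl⟩)
  rw [cappedMass_succ]
  rcases (clusterMass_nonneg hA k (k + 1) (p^[k + 1] c)).eq_or_lt with h0 | hpos
  · have : cappedMass p F A k c = 0 := le_antisymm (hcS.trans h0.ge) (cappedMass_nonneg hA k c)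
    rw [this, zero_mul]
  · rw [min_eq_left ((one_le_div hpos).2 hlt.le), mul_one]

lemma exists_clusterMass_cappedMass_eq {c : ι} (hc : c ∈ F) (m : ℕ) :
    ∃ k ≤ m, clusterMass p F (cappedMass p F A m) k (p^[k] c) = A k := by
  induction m with
  | zero => exact ⟨0, le_rfl, by simp [clusterMass_zero, hc, cappedMass]⟩
  | succ m ih =>
    by_cases hsat :
        clusterMass p F (cappedMass p F A (m + 1)) (m + 1) (p^[m + 1] c) = A (m + 1)
    · exact ⟨m + 1, le_rfl, hsat⟩
    -- an uncapped step `m + 1` leaves the whole level-`(m + 1)` cluster of `c` unchanged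
    have hlt : clusterMass p F (cappedMass p F A m) (m + 1) (p^[m + 1] c) < A (m + 1) := by
      rw [clusterMass_cappedMass_succ hA] at hsat
      exact lt_of_not_ge fun h => hsat (min_eq_right h)
    obtain ⟨k, hkm, hk⟩ := ih
    refine ⟨k, hkm.trans m.le_succ, hk ▸ sum_congr rfl fun c' hc' => ?_⟩
    obtain ⟨hc'F, hc'k⟩ := mem_filter.1 hc'
    have hc'm : p^[m + 1] c' = p^[m + 1] c :=
      Function.iterate_eq_iterate_of_le hc'k (hkm.trans m.le_succ)
    exact cappedMass_succ_eq_of_lt hA hc'F (hc'm ▸ hlt)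

/-- Grouping the points by their highest saturated cluster: these clusters are disjoint, so the
caps they carry add up to the total mass. -/
lemma exists_sum_image_eq_sum_cappedMass (m : ℕ) :
    ∃ K : ι → ℕ, (∀ c, K c ≤ m) ∧
      ∑ q ∈ F.image (fun c => (K c, p^[K c] c)), A q.1 = ∑ c ∈ F, cappedMass p F A m c := by
  classical
  let saturated (c : ι) (k : ℕ) : Prop :=
    clusterMass p F (cappedMass p F A m) k (p^[k] c) = A k
  let K (c : ι) : ℕ := Nat.findGreatest (saturated c) m
  have hK : ∀ c ∈ F, saturated c (K c) := fun c hc =>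
    let ⟨_, hkm, hk⟩ := exists_clusterMass_cappedMass_eq hA hc m
    Nat.findGreatest_spec hkm hk
  have saturated_iff : ∀ {c c' : ι} {j k : ℕ}, p^[j] c' = p^[j] c → j ≤ k →
      (saturated c' k ↔ saturated c k) := fun h hjk => by
    simp only [saturated, Function.iterate_eq_iterate_of_le h hjk]
  have hKeq : ∀ c ∈ F, ∀ c' ∈ F, p^[K c] c' = p^[K c] c → K c' = K c := by
    intro c hc c' hc' h
    have hle : K c ≤ K c' :=
      Nat.le_findGreatest (Nat.findGreatest_le m) ((saturated_iff h le_rfl).2 (hK c hc))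
    exact le_antisymm
      (Nat.le_findGreatest (Nat.findGreatest_le m) ((saturated_iff h hle).1 (hK c' hc'))) hle
  refine ⟨K, fun c => Nat.findGreatest_le m, sum_image' _ fun c hc => ?_⟩
  rw [← hK c hc]
  refine sum_congr (filter_congr fun c' hc' => ⟨fun h => ?_, fun h => ?_⟩) fun _ _ => rfl
  · rw [hKeq c hc c' hc' h, h]
  · obtain ⟨h1, h2⟩ := Prod.mk.inj h
    rwa [h1] at h2

end CappedMass

variable {d : ℕ}

def cube (ℓ : ℝ) (c : Fin d → ℤ) : Set (EuclideanSpace ℝ (Fin d)) :=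
  {x | ∀ i, c i * ℓ ≤ x i ∧ x i ≤ (c i + 1) * ℓ}

/-- `Int` division by `2` rounds down, so `cube (2 * ℓ) (parent c)` contains `cube ℓ c`. -/
def parent (c : Fin d → ℤ) : Fin d → ℤ := fun i => c i / 2

variable {ℓ : ℝ}

lemma mem_cube_floor (hℓ : 0 < ℓ) (x : EuclideanSpace ℝ (Fin d)) :
    x ∈ cube ℓ (fun i => ⌊x i / ℓ⌋) := fun _ =>
  ⟨(le_div_iff₀ hℓ).1 (Int.floor_le _), ((div_lt_iff₀ hℓ).1 (Int.lt_floor_add_one _)).le⟩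

lemma cube_subset_cube_parent (hℓ : 0 ≤ ℓ) (c : Fin d → ℤ) :
    cube ℓ c ⊆ cube (2 * ℓ) (parent c) := by
  intro x hx i
  obtain ⟨h1, h2⟩ := hx i
  have hlo : ((2 * (c i / 2) : ℤ) : ℝ) ≤ c i := by
    exact_mod_cast (by omega : 2 * (c i / 2) ≤ c i)
  have hhi : (c i : ℝ) + 1 ≤ ((2 * (c i / 2) + 2 : ℤ) : ℝ) := by
    exact_mod_cast (by omega : c i + 1 ≤ 2 * (c i / 2) + 2)
  push_cast at hlo hhi
  simp only [parent]
  constructor <;> nlinarith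

lemma cube_subset_cube_parent_iterate (hℓ : 0 ≤ ℓ) (c : Fin d → ℤ) (k : ℕ) :
    cube ℓ c ⊆ cube (2 ^ k * ℓ) (parent^[k] c) := by
  induction k with
  | zero => simp
  | succ k ih =>
    rw [Function.iterate_succ_apply', pow_succ, mul_comm _ (2 : ℝ), mul_assoc]
    exact ih.trans (cube_subset_cube_parent (by positivity) _)

lemma diam_cube (hℓ : 0 ≤ ℓ) (c : Fin d → ℤ) : diam (cube ℓ c) = √d * ℓ := by
  have hdist : ∀ x ∈ cube ℓ c, ∀ y ∈ cube ℓ c, dist x y ≤ √d * ℓ := fun x hx y hy =>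
    EuclideanSpace.dist_le_sqrt_mul_of_abs_sub_le hℓ fun i => abs_sub_le_iff.2
      ⟨by linarith [(hx i).2, (hy i).1], by linarith [(hx i).1, (hy i).2]⟩
  have hlo : WithLp.toLp 2 (fun i => (c i : ℝ) * ℓ) ∈ cube ℓ c := fun i =>
    ⟨le_rfl, by dsimp only; linarith⟩
  have hhi : WithLp.toLp 2 (fun i => ((c i : ℝ) + 1) * ℓ) ∈ cube ℓ c := fun i =>
    ⟨by dsimp only; linarith, le_rfl⟩
  have hcorners : dist (WithLp.toLp 2 (fun i => ((c i : ℝ) + 1) * ℓ))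
      (WithLp.toLp 2 (fun i => (c i : ℝ) * ℓ)) = √d * ℓ :=
    EuclideanSpace.dist_eq_sqrt_mul_of_abs_sub_eq hℓ fun _ => by simp [add_mul, abs_of_nonneg hℓ]
  refine le_antisymm (diam_le_of_forall_dist_le (by positivity) hdist) ?_
  exact hcorners ▸ dist_le_diam_of_mem (isBounded_iff.2 ⟨_, hdist⟩) hhi hlo

lemma card_le_of_forall_cube_meets_ball {L r : ℝ} (hL : 0 < L) (hr : r ≤ √d * L)
    (x : EuclideanSpace ℝ (Fin d)) {G : Finset (Fin d → ℤ)}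
    (hG : ∀ a ∈ G, ∃ y ∈ cube L a, dist y x < r) : #G ≤ (2 * d + 1) ^ d := by
  let t (i : Fin d) : ℤ := ⌊(x i - r) / L⌋
  calc #G ≤ #(Fintype.piFinset fun i => Ico (t i) (t i + (2 * d + 1))) := card_le_card ?_
    _ = (2 * d + 1) ^ d := by simp [Fintype.card_piFinset, Int.card_Ico]; norm_cast
  intro a ha
  obtain ⟨y, hy, hyx⟩ := hG a ha
  rw [Fintype.mem_piFinset]
  intro i
  have hyi : |y i - x i| < r := (PiLp.dist_apply_le y x i).trans_lt hyx
  rw [abs_lt] at hyi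
  obtain ⟨h1, h2⟩ := hy i
  have hdL : √d * L ≤ d * L := mul_le_mul_of_nonneg_right
    (Real.sqrt_le_self_iff.2 (d.eq_zero_or_pos.imp (fun h => by simp [h]) Nat.one_le_cast.2)) hL.le
  have hlo : (x i - r) / L < a i + 1 := by rw [div_lt_iff₀ hL]; linarith
  have hhi : (a i : ℝ) - 2 * d < (x i - r) / L := by rw [lt_div_iff₀ hL]; nlinarith
  have ht := Int.lt_floor_add_one ((x i - r) / L)
  have ht' := Int.floor_le ((x i - r) / L)
  rw [Finset.mem_Ico]
  constructor
  · have : (t i : ℝ) < a i + 1 := ht'.trans_lt hlo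
    exact Int.lt_add_one_iff.1 (by exact_mod_cast this)
  · have : (a i : ℝ) < t i + (2 * d + 1) := by simp only [t]; linarith
    exact_mod_cast this

lemma exists_finset_cube_cover {E : Set (EuclideanSpace ℝ (Fin d))} (hE : Bornology.IsBounded E)
    (hℓ : 0 < ℓ) : ∃ (F : Finset (Fin d → ℤ)) (pt : (Fin d → ℤ) → EuclideanSpace ℝ (Fin d)),
      (∀ x ∈ E, ∃ c ∈ F, x ∈ cube ℓ c) ∧ ∀ c ∈ F, pt c ∈ E ∧ pt c ∈ cube ℓ c := by
  classical
  obtain ⟨R, hR⟩ := hE.subset_closedBall 0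
  let F := (Fintype.piFinset fun _ : Fin d => Icc ⌊-R / ℓ⌋ ⌊R / ℓ⌋).filter
    fun c => ∃ x ∈ E, x ∈ cube ℓ c
  choose! pt hpt using fun c (hc : c ∈ F) => (mem_filter.1 hc).2
  refine ⟨F, pt, fun x hx => ⟨_, mem_filter.2 ⟨?_, x, hx, mem_cube_floor hℓ x⟩,
    mem_cube_floor hℓ x⟩, hpt⟩
  rw [Fintype.mem_piFinset]
  intro i
  have hxi : |x i| ≤ R := by
    simpa using (PiLp.norm_apply_le x i).trans (mem_closedBall_zero_iff.1 (hR hx))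
  rw [abs_le] at hxi
  exact mem_Icc.2 ⟨Int.floor_mono (div_le_div_of_nonneg_right hxi.1 hℓ.le),
    Int.floor_mono (div_le_div_of_nonneg_right hxi.2 hℓ.le)⟩

theorem lt_sum_cappedMass_of_not_isAdmissibleCover {E : Set (EuclideanSpace ℝ (Fin d))}
    {θ δ s ε : ℝ} {F : Finset (Fin d → ℤ)} {m : ℕ} (hℓ : 0 < ℓ)
    (hlo : δ ^ (1 / θ) ≤ √d * ℓ) (hhi : √d * (2 ^ m * ℓ) ≤ δ)
    (hcover : ∀ x ∈ E, ∃ c ∈ F, x ∈ cube ℓ c) (hE : ¬ IsAdmissibleCover θ δ s ε E) :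
    ε < ∑ c ∈ F, cappedMass parent F (fun k => (√d * (2 ^ k * ℓ)) ^ s) m c := by
  have hA : ∀ k : ℕ, 0 ≤ (√d * (2 ^ k * ℓ)) ^ s := fun k => by positivity
  obtain ⟨K, hKm, hsum⟩ := exists_sum_image_eq_sum_cappedMass (p := parent) (F := F) hA m
  refine lt_of_not_ge fun hle => hE (isAdmissibleCover_of_finset
    (F.image fun c => (K c, parent^[K c] c)) (fun q => cube (2 ^ q.1 * ℓ) q.2) ?_ ?_ ?_)
  · intro x hx
    obtain ⟨c, hc, hxc⟩ := hcover x hx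
    exact mem_iUnion₂.2
      ⟨_, mem_image_of_mem _ hc, cube_subset_cube_parent_iterate hℓ.le c (K c) hxc⟩
  · intro q hq
    obtain ⟨c, -, rfl⟩ := Finset.mem_image.1 hq
    rw [diam_cube (by positivity)]
    exact ⟨hlo.trans (by gcongr; exact le_mul_of_one_le_left hℓ.le (one_le_pow₀ one_le_two)),
      le_trans (by gcongr; exacts [one_le_two, hKm c]) hhi⟩
  · rw [← hsum] at hle
    refine le_of_eq_of_le (sum_congr rfl fun q _ => ?_) hle
    rw [diam_cube (by positivity)]

open Classical in
theorem sum_cappedMass_ball_le {F : Finset (Fin d → ℤ)}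
    {pt : (Fin d → ℤ) → EuclideanSpace ℝ (Fin d)} {s r : ℝ} {m : ℕ} (hℓ : 0 < ℓ) (hs : 0 ≤ s)
    (hpt : ∀ c ∈ F, pt c ∈ cube ℓ c) (hr : √d * ℓ < 2 * r) (hrm : r ≤ 2 ^ m * (√d * ℓ))
    (x : EuclideanSpace ℝ (Fin d)) :
    ∑ c ∈ F with pt c ∈ ball x r, cappedMass parent F (fun k => (√d * (2 ^ k * ℓ)) ^ s) m c ≤
      (2 * d + 1) ^ d * (2 * r) ^ s := by
  set u := cappedMass parent F (fun k => (√d * (2 ^ k * ℓ)) ^ s) m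
  have hA : ∀ k : ℕ, 0 ≤ (√d * (2 ^ k * ℓ)) ^ s := fun k => by positivity
  obtain ⟨k, hkm, hrk, hkr⟩ := exists_le_two_pow_mul_lt hr hrm
  rw [mul_left_comm] at hrk hkr
  let G := (F.filter (pt · ∈ ball x r)).image parent^[k]
  have hG : #G ≤ (2 * d + 1) ^ d := by
    refine card_le_of_forall_cube_meets_ball (by positivity) hrk x ?_
    simp only [G, Finset.forall_mem_image, mem_filter]
    rintro c ⟨hc, hcx⟩
    exact ⟨pt c, cube_subset_cube_parent_iterate hℓ.le c k (hpt c hc), hcx⟩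
  calc ∑ c ∈ F with pt c ∈ ball x r, u c
      = ∑ a ∈ G, ∑ c ∈ {c ∈ F | pt c ∈ ball x r} with parent^[k] c = a, u c :=
        (sum_fiberwise_of_maps_to (fun c hc => mem_image_of_mem _ hc) u).symm
    _ ≤ ∑ a ∈ G, clusterMass parent F u k a :=
        sum_le_sum fun a _ => sum_le_sum_of_subset_of_nonneg
          (filter_subset_filter _ (filter_subset _ _)) fun c _ _ => cappedMass_nonneg hA m c
    _ ≤ ∑ _a ∈ G, (√d * (2 ^ k * ℓ)) ^ s :=
        sum_le_sum fun a _ => clusterMass_cappedMass_le hA hkm a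
    _ = #G * (√d * (2 ^ k * ℓ)) ^ s := by rw [sum_const, nsmul_eq_mul]
    _ ≤ (2 * d + 1) ^ d * (2 * r) ^ s := by gcongr; exact_mod_cast hG

theorem exists_measure_of_not_isAdmissibleCover (hd : 0 < d)
    {E : Set (EuclideanSpace ℝ (Fin d))} (hE : Bornology.IsBounded E) {θ δ s ε : ℝ} (hs : 0 ≤ s)
    (hε : 0 < ε) (hδ : 0 < δ) (hδθ : δ ^ (1 / θ) ≤ δ) (hnot : ¬ IsAdmissibleCover θ δ s ε E) :
    ∃ μ : Measure (EuclideanSpace ℝ (Fin d)), IsProbabilityMeasure μ ∧ μ Eᶜ = 0 ∧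
      ∀ x r, δ ^ (1 / θ) ≤ r → r ≤ δ →
        μ (ball x r) ≤ ENNReal.ofReal ((2 * d + 1) ^ d * 2 ^ s / ε * r ^ s) := by
  have ha : 0 < δ ^ (1 / θ) := Real.rpow_pos_of_pos hδ _
  obtain ⟨m, hlo, hhi⟩ := exists_div_two_pow_mem_Ico ha hδθ
  have hsd : 0 < √d := Real.sqrt_pos.2 (by exact_mod_cast hd)
  set ℓ := δ / 2 ^ m / √d
  have hℓ : 0 < ℓ := by positivity
  have hℓd : √d * ℓ = δ / 2 ^ m := mul_div_cancel₀ _ hsd.ne'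
  have htop : 2 ^ m * (√d * ℓ) = δ := by rw [hℓd, mul_div_cancel₀ _ (by positivity)]
  obtain ⟨F, pt, hcover, hpt⟩ := exists_finset_cube_cover hE hℓ
  set u := cappedMass parent F (fun k => (√d * (2 ^ k * ℓ)) ^ s) m
  have hmass : ε < ∑ c ∈ F, u c :=
    lt_sum_cappedMass_of_not_isAdmissibleCover hℓ (hℓd ▸ hlo) (by rw [mul_left_comm, htop])
      hcover hnot
  obtain ⟨μ, hμ, hμt⟩ := exists_isProbabilityMeasure_apply_eq F u pt
    (fun c _ => cappedMass_nonneg (fun k => by positivity) m c) (hε.trans hmass)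
  refine ⟨μ, hμ, ?_, fun x r hr hrδ => ?_⟩
  · rw [hμt, sum_filter]
    simp +contextual [hpt]
  · have hball := sum_cappedMass_ball_le hℓ hs (fun c hc => (hpt c hc).2) (by linarith)
      (htop.symm ▸ hrδ) x
    rw [hμt]
    have hnonneg : 0 ≤ (2 * d + 1 : ℝ) ^ d * (2 * r) ^ s :=
      mul_nonneg (by positivity) (Real.rpow_nonneg (by linarith) s)
    refine ENNReal.ofReal_le_ofReal ((div_le_div₀ hnonneg hball hε hmass.le).trans_eq ?_)
    rw [Real.mul_rpow zero_le_two (ha.trans_le hr).le]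
    ring

end Frostman

theorem frostman_upper_intermediate_general (d : ℕ) (E : Set (EuclideanSpace ℝ (Fin d)))
    (hE : IsCompact E) (hEne : E.Nonempty) (θ : ℝ) (hθ : θ ∈ Set.Ioc (0 : ℝ) 1) :
    ∀ s : ℝ, 0 < s → s < upperIntermediateDim θ E →
      ∃ c > 0, ∀ δ₀ > 0, ∃ δ ∈ Set.Ioo (0 : ℝ) δ₀,
        ∃ μ : Measure (EuclideanSpace ℝ (Fin d)),
          IsProbabilityMeasure μ ∧ μ Eᶜ = 0 ∧
          ∀ x ∈ E, ∀ r : ℝ, δ ^ (1 / θ) ≤ r → r ≤ δ →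
            μ (Metric.ball x r) ≤ ENNReal.ofReal (c * r ^ s) := by
  intro s hs hsE
  rcases d.eq_zero_or_pos with rfl | hd
  · exact absurd (hs.trans hsE) (upperIntermediateDim_fin_zero_of_nonempty hEne θ).not_gt
  obtain ⟨ε, hε, hnot⟩ := exists_not_isAdmissibleCover_of_lt_upperIntermediateDim hs.le hsE
  refine ⟨(2 * d + 1) ^ d * 2 ^ s / ε, by positivity, fun δ₀ hδ₀ => ?_⟩
  obtain ⟨δ, hδ, hδle, hδE⟩ := hnot (min (δ₀ / 2) 1) (by positivity)
  have hδθ : δ ^ (1 / θ) ≤ δ := by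
    simpa using Real.rpow_le_rpow_of_exponent_ge hδ (hδle.trans (min_le_right _ _))
      (one_le_one_div hθ.1 hθ.2)
  obtain ⟨μ, hμ, hμE, hμball⟩ :=
    Frostman.exists_measure_of_not_isAdmissibleCover hd hE.isBounded hs.le hε hδ hδθ hδE
  exact ⟨δ, ⟨hδ, hδle.trans_lt ((min_le_left _ _).trans_lt (half_lt_self hδ₀))⟩,
    μ, hμ, hμE, fun x _ => hμball x⟩

theorem frostman_upper_intermediate (d : ℕ) (E : Set (EuclideanSpace ℝ (Fin d)))
    (hE : IsCompact E) (hEne : E.Nonempty) (θ : ℝ) (hθ : θ ∈ Set.Ioc (0 : ℝ) 1)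
    (hdim : 0 < upperIntermediateDim θ E) :
    ∀ s : ℝ, 0 < s → s < upperIntermediateDim θ E →
      ∃ c > 0, ∀ δ₀ > 0, ∃ δ ∈ Set.Ioo (0 : ℝ) δ₀,
        ∃ μ : Measure (EuclideanSpace ℝ (Fin d)),
          IsProbabilityMeasure μ ∧ μ Eᶜ = 0 ∧
          ∀ x ∈ E, ∀ r : ℝ, δ ^ (1 / θ) ≤ r → r ≤ δ →
            μ (Metric.ball x r) ≤ ENNReal.ofReal (c * r ^ s) :=
  frostman_upper_intermediate_general d E hE hEne θ hθ
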